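/- Let A have Spark(A) = L+1 and k ≤ L. Then γ(ℓ_p, A, k), as a function of p on [0,1], is left-continuous at every p ∈ (0,1]: lim_{q→p⁻} γ(ℓ_q, A, k) = γ(ℓ_p, A, k). -/

import Mathlib

open Finset MeasureTheory Filter

/-- `phi p x = |x|^p`, with the convention `|x|^0 = 1` for `x ≠ 0` and `phi p 0 = 0`. -/
noncomputable def phi (p x : ℝ) : ℝ := if x = 0 then 0 else |x| ^ p

open Classical in
/-- support of a vector, as a finset -/
noncomputable def supp {n : ℕ} (z : Fin n → ℝ) : Finset (Fin n) :=
  Finset.univ.filter (fun i => z i ≠ 0)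

/-- `Spark(A) = s`: some `s` columns are linearly dependent (a kernel vector with support of
size `s`), and every nonzero kernel vector has support of size at least `s`. -/
def sparkEq {m n : ℕ} (A : Matrix (Fin m) (Fin n) ℝ) (s : ℕ) : Prop :=
  (∃ z, A.mulVec z = 0 ∧ z ≠ 0 ∧ (supp z).card = s) ∧
  (∀ z, A.mulVec z = 0 → z ≠ 0 → s ≤ (supp z).card)

/-- The set of constants `γ` satisfying the null space property inequality at level `k`. -/
def validNSC {m n : ℕ} (A : Matrix (Fin m) (Fin n) ℝ) (p : ℝ) (k : ℕ) : Set ℝ :=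
  {γ | ∀ S : Finset (Fin n), S.card ≤ k → ∀ z, A.mulVec z = 0 →
    ∑ i ∈ S, phi p (z i) ≤ γ * ∑ i ∈ Sᶜ, phi p (z i)}

/-- The null space constant `γ(ℓ_p, A, k)`: the smallest valid constant. -/
noncomputable def gammaNSC {m n : ℕ} (A : Matrix (Fin m) (Fin n) ℝ) (p : ℝ) (k : ℕ) : ℝ :=
  sInf (validNSC A p k)

/-- The ratio `θ(p, z, S)`. -/
noncomputable def theta {n : ℕ} (p : ℝ) (z : Fin n → ℝ) (S : Finset (Fin n)) : ℝ :=
  (∑ i ∈ S, phi p (z i)) / (∑ i ∈ Sᶜ, phi p (z i))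

/-!
For `q > 0`, `γ(ℓ_q, A, k)` is the supremum of the ratios `θ(q, z, S)` over nonzero null vectors
`z` and `#S ≤ k`: since `k < Spark(A)` no denominator vanishes. Each ratio is continuous in `q`,
so `γ` is lower semicontinuous in `q`. It is also non-decreasing: for fixed `z`, the set `T` of the
`k` largest entries of `|z|` maximises `θ(q, z, ·)` for every `q` simultaneously, and `θ(q, z, T)`
grows with `q` because every entry on `T` dominates every entry off `T`. A non-decreasing lower
semicontinuous function is left-continuous.
-/

section Phi

variable {p q : ℝ}

lemma phi_zero (q : ℝ) : phi q 0 = 0 := if_pos rfl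

lemma phi_of_ne_zero (q : ℝ) {x : ℝ} (hx : x ≠ 0) : phi q x = |x| ^ q := if_neg hx

lemma phi_nonneg (q x : ℝ) : 0 ≤ phi q x := by
  unfold phi
  split_ifs
  exacts [le_rfl, Real.rpow_nonneg (abs_nonneg x) q]

lemma phi_pos (q : ℝ) {x : ℝ} (hx : x ≠ 0) : 0 < phi q x := by
  rw [phi_of_ne_zero q hx]
  exact Real.rpow_pos_of_pos (abs_pos.2 hx) q

lemma phi_le_phi (hq : 0 ≤ q) {x y : ℝ} (hxy : |x| ≤ |y|) : phi q x ≤ phi q y := by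
  rcases eq_or_ne x 0 with rfl | hx
  · simpa only [phi_zero] using phi_nonneg q y
  have hy : y ≠ 0 := abs_pos.1 ((abs_pos.2 hx).trans_le hxy)
  rw [phi_of_ne_zero q hx, phi_of_ne_zero q hy]
  exact Real.rpow_le_rpow (abs_nonneg x) hxy hq

lemma phi_mul (q : ℝ) {c : ℝ} (hc : c ≠ 0) (x : ℝ) : phi q (c * x) = |c| ^ q * phi q x := by
  rcases eq_or_ne x 0 with rfl | hx
  · simp only [mul_zero, phi_zero]
  rw [phi_of_ne_zero q (mul_ne_zero hc hx), phi_of_ne_zero q hx, abs_mul,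
    Real.mul_rpow (abs_nonneg c) (abs_nonneg x)]

lemma phi_mul_phi_le (hqp : q ≤ p) {x y : ℝ} (hyx : |y| ≤ |x|) :
    phi q x * phi p y ≤ phi p x * phi q y := by
  rcases eq_or_ne y 0 with rfl | hy
  · simp only [phi_zero, mul_zero, le_refl]
  have hy' : 0 < |y| := abs_pos.2 hy
  have hx' : 0 < |x| := hy'.trans_le hyx
  rw [phi_of_ne_zero _ (abs_pos.1 hx'), phi_of_ne_zero _ (abs_pos.1 hx'), phi_of_ne_zero _ hy,
    phi_of_ne_zero _ hy]
  have hsplit : ∀ a : ℝ, 0 < a → a ^ p = a ^ q * a ^ (p - q) := fun a ha => by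
    rw [← Real.rpow_add ha, add_sub_cancel]
  rw [hsplit _ hx', hsplit _ hy']
  have hpow : |y| ^ (p - q) ≤ |x| ^ (p - q) := Real.rpow_le_rpow hy'.le hyx (sub_nonneg.2 hqp)
  calc |x| ^ q * (|y| ^ q * |y| ^ (p - q)) = |x| ^ q * |y| ^ q * |y| ^ (p - q) := by ring
    _ ≤ |x| ^ q * |y| ^ q * |x| ^ (p - q) := by gcongr
    _ = |x| ^ q * |x| ^ (p - q) * |y| ^ q := by ring

lemma continuous_phi (hq : 0 < q) : Continuous (phi q) := by
  have h : phi q = fun x => |x| ^ q := funext fun x => by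
    rcases eq_or_ne x 0 with rfl | hx
    · rw [phi_zero, abs_zero, Real.zero_rpow hq.ne']
    · exact phi_of_ne_zero q hx
  rw [h]
  exact continuous_abs.rpow_const fun _ => Or.inr hq.le

lemma continuous_phi_exponent (x : ℝ) : Continuous fun q => phi q x := by
  rcases eq_or_ne x 0 with rfl | hx
  · simp only [phi_zero]
    exact continuous_const
  simp only [phi_of_ne_zero _ hx]
  exact continuous_const.rpow continuous_id fun _ => Or.inl (abs_ne_zero.2 hx)

end Phi

def IsTopSet {ι α : Type*} [LE α] (f : ι → α) (t : Finset ι) : Prop :=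
  ∀ i ∈ t, ∀ j ∉ t, f j ≤ f i

section TopSet

variable {ι α : Type*}

lemma exists_isTopSet_card_eq [Fintype ι] [DecidableEq ι] [LinearOrder α] (f : ι → α) {k : ℕ}
    (hk : k ≤ Fintype.card ι) : ∃ t : Finset ι, t.card = k ∧ IsTopSet f t := by
  induction k with
  | zero => exact ⟨∅, rfl, fun i hi => absurd hi (Finset.notMem_empty i)⟩
  | succ k ih =>
    obtain ⟨t, rfl, ht⟩ := ih (Nat.le_of_succ_le hk)
    have hne : tᶜ.Nonempty := by
      rw [← Finset.card_pos, Finset.card_compl]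
      omega
    obtain ⟨j, hj, hjmax⟩ := Finset.exists_max_image tᶜ f hne
    have hjt : j ∉ t := Finset.mem_compl.1 hj
    refine ⟨insert j t, Finset.card_insert_of_notMem hjt, fun i hi l hl => ?_⟩
    rw [Finset.mem_insert, not_or] at hl
    rcases Finset.mem_insert.1 hi with rfl | hi
    · exact hjmax l (Finset.mem_compl.2 hl.2)
    · exact ht i hi l hl.2

lemma IsTopSet.comp_abs_phi {q : ℝ} (hq : 0 ≤ q) {z : ι → ℝ} {t : Finset ι}
    (ht : IsTopSet (fun i => |z i|) t) : IsTopSet (fun i => phi q (z i)) t :=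
  fun i hi j hj => phi_le_phi hq (ht i hi j hj)

lemma IsTopSet.sum_le [DecidableEq ι] [AddCommMonoid α] [LinearOrder α] [IsOrderedAddMonoid α]
    {f : ι → α} {s t : Finset ι} (ht : IsTopSet f t) (hf : ∀ i, 0 ≤ f i)
    (hst : s.card ≤ t.card) : ∑ i ∈ s, f i ≤ ∑ i ∈ t, f i := by
  rw [← Finset.sum_inter_add_sum_sdiff s t, ← Finset.sum_inter_add_sum_sdiff t s,
    Finset.inter_comm t s]
  refine add_le_add le_rfl ?_
  rcases (t \ s).eq_empty_or_nonempty with hts | hts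
  · have hst' := Finset.card_sdiff_le_card_sdiff_iff.2 hst
    rw [hts, Finset.card_empty, Nat.le_zero, Finset.card_eq_zero] at hst'
    rw [hst', hts]
  set b := (t \ s).inf' hts f
  calc ∑ i ∈ s \ t, f i ≤ (s \ t).card • b :=
        Finset.sum_le_card_nsmul _ _ _ fun j hj => Finset.le_inf' hts f fun i hi =>
          ht i (Finset.mem_sdiff.1 hi).1 j (Finset.mem_sdiff.1 hj).2
    _ ≤ (t \ s).card • b :=
        nsmul_le_nsmul_left (Finset.le_inf' hts f fun i _ => hf i)
          (Finset.card_sdiff_le_card_sdiff_iff.2 hst)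
    _ ≤ ∑ i ∈ t \ s, f i := Finset.card_nsmul_le_sum _ _ _ fun i hi => Finset.inf'_le f hi

end TopSet

section Theta

variable {n : ℕ} {p q : ℝ} {z : Fin n → ℝ} {S T : Finset (Fin n)}

lemma sum_compl_phi_pos (q : ℝ) (hS : S.card < (supp z).card) : 0 < ∑ i ∈ Sᶜ, phi q (z i) := by
  obtain ⟨i, hi, hiS⟩ := Finset.not_subset.1 fun h => (Finset.card_le_card h).not_gt hS
  have hzi : z i ≠ 0 := (Finset.mem_filter.1 hi).2
  exact Finset.sum_pos' (fun j _ => phi_nonneg q (z j)) ⟨i, Finset.mem_compl.2 hiS, phi_pos q hzi⟩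

lemma theta_smul (q : ℝ) {c : ℝ} (hc : c ≠ 0) (z : Fin n → ℝ) (S : Finset (Fin n)) :
    theta q (c • z) S = theta q z S := by
  have hcq : |c| ^ q ≠ 0 := (Real.rpow_pos_of_pos (abs_pos.2 hc) q).ne'
  simp only [theta, Pi.smul_apply, smul_eq_mul, phi_mul q hc, ← Finset.mul_sum]
  exact mul_div_mul_left _ _ hcq

lemma theta_le_theta_of_isTopSet (hq : 0 ≤ q) (hT : IsTopSet (fun i => |z i|) T)
    (hST : S.card ≤ T.card) (hden : 0 < ∑ i ∈ Tᶜ, phi q (z i)) : theta q z S ≤ theta q z T := by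
  have hnum := (hT.comp_abs_phi hq).sum_le (fun i => phi_nonneg q (z i)) hST
  have hS := Finset.sum_add_sum_compl S fun i => phi q (z i)
  have hT := Finset.sum_add_sum_compl T fun i => phi q (z i)
  exact div_le_div₀ (Finset.sum_nonneg fun i _ => phi_nonneg q (z i)) hnum hden (by linarith)

lemma theta_le_theta_of_le (hqp : q ≤ p) (hT : IsTopSet (fun i => |z i|) T)
    (hq : 0 < ∑ i ∈ Tᶜ, phi q (z i)) (hp : 0 < ∑ i ∈ Tᶜ, phi p (z i)) :
    theta q z T ≤ theta p z T := by
  rw [theta, theta, div_le_div_iff₀ hq hp, Finset.sum_mul_sum, Finset.sum_mul_sum]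
  exact Finset.sum_le_sum fun i hi => Finset.sum_le_sum fun j hj =>
    phi_mul_phi_le hqp (hT i hi j (Finset.mem_compl.1 hj))

lemma continuousAt_theta_exponent (hden : ∑ i ∈ Sᶜ, phi p (z i) ≠ 0) :
    ContinuousAt (fun q => theta q z S) p :=
  ((continuous_finsetSum _ fun i _ => continuous_phi_exponent (z i)).continuousAt).div
    (continuous_finsetSum _ fun i _ => continuous_phi_exponent (z i)).continuousAt hden

lemma continuousOn_theta (hq : 0 < q) (S : Finset (Fin n)) :
    ContinuousOn (fun z : Fin n → ℝ => theta q z S) {z | ∑ i ∈ Sᶜ, phi q (z i) ≠ 0} :=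
  (continuous_finsetSum _ fun i _ => (continuous_phi hq).comp (continuous_apply i)).continuousOn.div
    (continuous_finsetSum _ fun i _ => (continuous_phi hq).comp (continuous_apply i)).continuousOn
    fun _ h => h

end Theta

def thetaSet {m n : ℕ} (A : Matrix (Fin m) (Fin n) ℝ) (q : ℝ) (k : ℕ) : Set ℝ :=
  {t | ∃ z, A.mulVec z = 0 ∧ z ≠ 0 ∧ ∃ S : Finset (Fin n), S.card ≤ k ∧ theta q z S = t}

section Gamma

variable {m n k : ℕ} {A : Matrix (Fin m) (Fin n) ℝ} {p q : ℝ}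

lemma validNSC_eq_upperBounds (hA : ∀ z, A.mulVec z = 0 → z ≠ 0 → k < (supp z).card) (q : ℝ) :
    validNSC A q k = upperBounds (thetaSet A q k) := by
  ext γ
  constructor
  · rintro hγ _ ⟨z, hz, hz0, S, hS, rfl⟩
    rw [theta, div_le_iff₀ (sum_compl_phi_pos q (hS.trans_lt (hA z hz hz0)))]
    exact hγ S hS z hz
  · intro hγ S hS z hz
    rcases eq_or_ne z 0 with rfl | hz0
    · simp only [Pi.zero_apply, phi_zero, Finset.sum_const_zero, mul_zero, le_refl]
    have h := hγ ⟨z, hz, hz0, S, hS, rfl⟩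
    rwa [theta, div_le_iff₀ (sum_compl_phi_pos q (hS.trans_lt (hA z hz hz0)))] at h

-- By scale invariance of `θ` it suffices to bound `θ` on the compact unit sphere of the kernel,
-- where the denominator does not vanish.
lemma bddAbove_thetaSet (hA : ∀ z, A.mulVec z = 0 → z ≠ 0 → k < (supp z).card) (hq : 0 < q) :
    BddAbove (thetaSet A q k) := by
  set K := {z : Fin n → ℝ | A.mulVec z = 0} ∩ Metric.sphere 0 1
  have hK : IsCompact K := (isCompact_sphere 0 1).inter_left
    (isClosed_eq (Matrix.mulVecLin A).continuous_of_finiteDimensional continuous_const)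
  have hsub : thetaSet A q k ⊆
      ⋃ S ∈ {S : Finset (Fin n) | S.card ≤ k}, (fun z => theta q z S) '' K := by
    rintro _ ⟨z, hz, hz0, S, hS, rfl⟩
    refine Set.mem_biUnion hS
      ⟨‖z‖⁻¹ • z, ⟨?_, ?_⟩, theta_smul q (inv_ne_zero (norm_ne_zero_iff.2 hz0)) z S⟩
    · simp only [Set.mem_ofPred_eq, Matrix.mulVec_smul, hz, smul_zero]
    · simpa using norm_smul_inv_norm (𝕜 := ℝ) hz0
  refine BddAbove.mono hsub ((Set.toFinite _).bddAbove_biUnion.2 fun S hS =>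
    hK.bddAbove_image ((continuousOn_theta hq S).mono fun z hz => ?_))
  exact (sum_compl_phi_pos q (Set.mem_ofPred.1 hS |>.trans_lt
    (hA z hz.1 (ne_zero_of_mem_unit_sphere ⟨z, hz.2⟩)))).ne'

lemma isLUB_gammaNSC (hA : ∀ z, A.mulVec z = 0 → z ≠ 0 → k < (supp z).card)
    (hker : ∃ z, A.mulVec z = 0 ∧ z ≠ 0) (hq : 0 < q) :
    IsLUB (thetaSet A q k) (gammaNSC A q k) := by
  obtain ⟨z, hz, hz0⟩ := hker
  have hne : (thetaSet A q k).Nonempty := ⟨_, z, hz, hz0, ∅, Nat.zero_le k, rfl⟩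
  have hbdd := bddAbove_thetaSet hA hq
  rw [gammaNSC, validNSC_eq_upperBounds hA, csInf_upperBounds_eq_csSup hbdd hne]
  exact isLUB_csSup hne hbdd

lemma monotoneOn_gammaNSC (hA : ∀ z, A.mulVec z = 0 → z ≠ 0 → k < (supp z).card)
    (hker : ∃ z, A.mulVec z = 0 ∧ z ≠ 0) : MonotoneOn (fun q => gammaNSC A q k) (Set.Ioi 0) := by
  intro q hq p hp hqp
  have hkn : k ≤ Fintype.card (Fin n) := by
    obtain ⟨z, hz, hz0⟩ := hker
    exact (hA z hz hz0).le.trans (Finset.card_le_univ _)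
  refine (isLUB_gammaNSC hA hker hq).2 ?_
  rintro _ ⟨z, hz, hz0, S, hS, rfl⟩
  obtain ⟨T, hTk, hT⟩ := exists_isTopSet_card_eq (fun i => |z i|) hkn
  have hden : ∀ r, 0 < ∑ i ∈ Tᶜ, phi r (z i) := fun r =>
    sum_compl_phi_pos r (hTk ▸ hA z hz hz0)
  calc theta q z S ≤ theta q z T := theta_le_theta_of_isTopSet (le_of_lt hq) hT (hTk ▸ hS) (hden q)
    _ ≤ theta p z T := theta_le_theta_of_le hqp hT (hden q) (hden p)
    _ ≤ gammaNSC A p k := (isLUB_gammaNSC hA hker hp).1 ⟨z, hz, hz0, T, hTk.le, rfl⟩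

lemma lowerSemicontinuousAt_gammaNSC (hA : ∀ z, A.mulVec z = 0 → z ≠ 0 → k < (supp z).card)
    (hker : ∃ z, A.mulVec z = 0 ∧ z ≠ 0) (hp : 0 < p) :
    LowerSemicontinuousAt (fun q => gammaNSC A q k) p := by
  intro a ha
  obtain ⟨_, ⟨z, hz, hz0, S, hS, rfl⟩, hlt⟩ := (lt_isLUB_iff (isLUB_gammaNSC hA hker hp)).1 ha
  have hden : ∑ i ∈ Sᶜ, phi p (z i) ≠ 0 := (sum_compl_phi_pos p (hS.trans_lt (hA z hz hz0))).ne'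
  filter_upwards [(continuousAt_theta_exponent hden).eventually (eventually_gt_nhds hlt),
    eventually_gt_nhds hp] with q hθ hq
  exact hθ.trans_le ((isLUB_gammaNSC hA hker hq).1 ⟨z, hz, hz0, S, hS, rfl⟩)

end Gamma

/-- left-continuity of p ↦ γ(ℓ_p,A,k) at every p ∈ (0,1]. -/
theorem stmt6 {M N L : ℕ} (A : Matrix (Fin M) (Fin N) ℝ) (hspark : sparkEq A (L + 1))
    (k : ℕ) (hk : k ≤ L) (p : ℝ) (hp : p ∈ Set.Ioc (0 : ℝ) 1) :
    Tendsto (fun q => gammaNSC A q k) (nhdsWithin p (Set.Ico 0 p))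
      (nhds (gammaNSC A p k)) := by
  have hA : ∀ z, A.mulVec z = 0 → z ≠ 0 → k < (supp z).card := fun z hz hz0 =>
    (Nat.lt_succ_of_le hk).trans_le (hspark.2 z hz hz0)
  obtain ⟨z, hz, hz0, -⟩ := hspark.1
  have hker : ∃ z, A.mulVec z = 0 ∧ z ≠ 0 := ⟨z, hz, hz0⟩
  have hupper : UpperSemicontinuousWithinAt (fun q => gammaNSC A q k) (Set.Ico 0 p) p := by
    intro b hb
    filter_upwards [self_mem_nhdsWithin, nhdsWithin_le_nhds (eventually_gt_nhds hp.1)]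
      with q hq hq0
    exact (monotoneOn_gammaNSC hA hker hq0 hp.1 hq.2.le).trans_lt hb
  exact continuousWithinAt_iff_lower_upperSemicontinuousWithinAt.2
    ⟨(lowerSemicontinuousAt_gammaNSC hA hker hp.1).lowerSemicontinuousWithinAt _, hupper⟩
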